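/- Closed form of the ℓ₁ - αℓ₂ proximal operator, case 2: Let x ∈ R^n, β > 0, α ∈ [0,1], and suppose (1-α)β < ‖x‖_∞ ≤ β. Choose i ∈ argmax_j |x_j| and define x* by x*_i = (|x_i| + (α-1)β) sign(x_i) and x*_j = 0 for j ≠ i. Then x* minimizes y ↦ ‖y‖₁ - α‖y‖₂ + (1/(2β))‖x - y‖₂². -/

import Mathlib

open scoped BigOperators

/-- The ℓ₁ - αℓ₂ proximal objective. -/
noncomputable def proxObj {n : ℕ} (x : Fin n → ℝ) (α β : ℝ) (y : Fin n → ℝ) : ℝ :=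
  (∑ i, |y i|) - α * Real.sqrt (∑ i, (y i) ^ 2)
    + 1 / (2 * β) * ∑ i, (x i - y i) ^ 2

/-!
Write `A = ‖y‖₁`, `r = ‖y‖₂`, `m = ‖x‖_∞` and `c = m + (α - 1)β`. Since `⟪x, y⟫ ≤ m A` and
`r ≤ A`, for `m ≤ β` the objective satisfies
`2β · proxObj y ≥ ‖x‖₂² + r² + 2(β - m)A - 2αβr ≥ ‖x‖₂² + r² - 2cr = ‖x‖₂² - c² + (r - c)²`,
so it is bounded below by `(‖x‖₂² - c²) / (2β)`. In case 2 we have `c > 0` and, as `α ≤ 1`,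
`x_i ≠ 0`; so the 1-sparse vector `c · sign(x_i) · e_i` has `ℓ₁` and `ℓ₂` norm `c` and
`⟪x, ·⟫ = c m`, and it attains the bound: it is the equality case `r = A = c`.
-/

open Finset

namespace Real

theorem sign_mul_self_eq_abs (r : ℝ) : sign r * r = |r| := by
  rcases lt_trichotomy r 0 with h | rfl | h
  · rw [sign_of_neg h, abs_of_neg h]; ring
  · simp
  · rw [sign_of_pos h, abs_of_pos h]; ring

theorem abs_sign_of_ne_zero {r : ℝ} (hr : r ≠ 0) : |sign r| = 1 := by
  rcases sign_apply_eq_of_ne_zero r hr with h | h <;> simp [h]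

end Real

section SumLemmas

variable {ι : Type*} [Fintype ι]

theorem sqrt_sum_sq_le_sum_abs (y : ι → ℝ) : √(∑ j, y j ^ 2) ≤ ∑ j, |y j| := by
  refine Real.sqrt_le_iff.mpr ⟨sum_nonneg fun j _ => abs_nonneg _, ?_⟩
  simpa only [sq_abs] using sum_sq_le_sq_sum_of_nonneg (s := univ) fun j _ => abs_nonneg (y j)

theorem sum_mul_le_of_abs_le {x : ι → ℝ} {m : ℝ} (hx : ∀ j, |x j| ≤ m) (y : ι → ℝ) :
    ∑ j, x j * y j ≤ m * ∑ j, |y j| := by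
  rw [mul_sum]
  refine sum_le_sum fun j _ => ?_
  calc x j * y j ≤ |x j| * |y j| := (le_abs_self _).trans (abs_mul _ _).le
    _ ≤ m * |y j| := mul_le_mul_of_nonneg_right (hx j) (abs_nonneg _)

theorem sum_sub_sq_eq (x y : ι → ℝ) :
    ∑ j, (x j - y j) ^ 2 = ∑ j, x j ^ 2 + ∑ j, y j ^ 2 - 2 * ∑ j, x j * y j := by
  simp only [sub_sq, sum_add_distrib, sum_sub_distrib, mul_sum, mul_assoc]
  ring

end SumLemmas

section ProxObj

variable {n : ℕ}

theorem le_proxObj_of_abs_le {x : Fin n → ℝ} {α β m : ℝ} (hβ : 0 < β)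
    (hx : ∀ j, |x j| ≤ m) (hm : m ≤ β) (y : Fin n → ℝ) :
    ((∑ j, x j ^ 2) - (m + (α - 1) * β) ^ 2) / (2 * β) ≤ proxObj x α β y := by
  rw [proxObj, sum_sub_sq_eq]
  set A := ∑ j, |y j|
  set r := √(∑ j, y j ^ 2)
  have hr_sq : r ^ 2 = ∑ j, y j ^ 2 := Real.sq_sqrt (sum_nonneg fun j _ => sq_nonneg _)
  have hrA : r ≤ A := sqrt_sum_sq_le_sum_abs y
  have hxy : ∑ j, x j * y j ≤ m * A := sum_mul_le_of_abs_le hx y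
  have hmA : (β - m) * r ≤ (β - m) * A := mul_le_mul_of_nonneg_left hrA (sub_nonneg.mpr hm)
  rw [← hr_sq, div_le_iff₀ (by positivity)]
  have hβ' : β ≠ 0 := hβ.ne'
  field_simp
  nlinarith [sq_nonneg (r - (m + (α - 1) * β))]

theorem proxObj_single (x : Fin n → ℝ) (α β : ℝ) (i : Fin n) (v : ℝ) :
    proxObj x α β (Pi.single i v)
      = |v| - α * |v| + ((∑ j, x j ^ 2) + v ^ 2 - 2 * (x i * v)) / (2 * β) := by
  have hsum (f : Fin n → ℝ → ℝ) (hf : ∀ j, f j 0 = 0) :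
      ∑ j, f j ((Pi.single i v : Fin n → ℝ) j) = f i v := by
    rw [Fintype.sum_eq_single i fun j hj => by rw [Pi.single_eq_of_ne hj, hf], Pi.single_eq_same]
  rw [proxObj, sum_sub_sq_eq, hsum (fun _ => (|·|)) fun _ => abs_zero,
    hsum (fun _ => (· ^ 2)) fun _ => zero_pow two_ne_zero,
    hsum (fun j => (x j * ·)) fun _ => mul_zero _, Real.sqrt_sq_eq_abs]
  ring

end ProxObj

theorem prox_l1_minus_alpha_l2_case2_general (n : ℕ) (x : Fin n → ℝ) (α β : ℝ)
    (hβ : 0 < β) (hα1 : α ≤ 1)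
    (i : Fin n) (hmax : ∀ j, |x j| ≤ |x i|)
    (hlow : (1 - α) * β < |x i|) (hup : ∀ j, |x j| ≤ β)
    (xStar : Fin n → ℝ)
    (hxStar : ∀ j, xStar j =
      if j = i then (|x i| + (α - 1) * β) * Real.sign (x i) else 0) :
    ∀ y : Fin n → ℝ, proxObj x α β xStar ≤ proxObj x α β y := by
  intro y
  set c := |x i| + (α - 1) * β
  have hc : 0 < c := by linarith
  have hxi : x i ≠ 0 := fun h => by
    rw [h, abs_zero] at hlow
    exact hlow.not_ge (mul_nonneg (sub_nonneg.mpr hα1) hβ.le)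
  have hxStar_single : xStar = Pi.single i (c * Real.sign (x i)) := by
    funext j
    rw [hxStar, Pi.single_apply]
  have hv_abs : |c * Real.sign (x i)| = c := by
    rw [abs_mul, Real.abs_sign_of_ne_zero hxi, abs_of_pos hc, mul_one]
  have hv_inner : x i * (c * Real.sign (x i)) = c * |x i| := by
    rw [← Real.sign_mul_self_eq_abs]; ring
  calc proxObj x α β xStar = ((∑ j, x j ^ 2) - c ^ 2) / (2 * β) := by
        rw [hxStar_single, proxObj_single, hv_abs, hv_inner, mul_pow, ← sq_abs (Real.sign _),
          Real.abs_sign_of_ne_zero hxi]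
        field_simp
        ring
    _ ≤ proxObj x α β y := le_proxObj_of_abs_le hβ hmax (hup i) y

/-- Closed form of the ℓ₁ - αℓ₂ proximal operator, case (1-α)β < ‖x‖_∞ ≤ β:
the 1-sparse vector supported at a maximal-magnitude entry i, with value
(|x_i| + (α-1)β) sign(x_i), is a minimizer. -/
theorem prox_l1_minus_alpha_l2_case2 (n : ℕ) (x : Fin n → ℝ) (α β : ℝ)
    (hβ : 0 < β) (hα0 : 0 ≤ α) (hα1 : α ≤ 1)
    (i : Fin n) (hmax : ∀ j, |x j| ≤ |x i|)
    (hlow : (1 - α) * β < |x i|) (hup : ∀ j, |x j| ≤ β)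
    (xStar : Fin n → ℝ)
    (hxStar : ∀ j, xStar j =
      if j = i then (|x i| + (α - 1) * β) * Real.sign (x i) else 0) :
    ∀ y : Fin n → ℝ, proxObj x α β xStar ≤ proxObj x α β y :=
  prox_l1_minus_alpha_l2_case2_general n x α β hβ hα1 i hmax hlow hup xStar hxStar
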